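/- arXiv:2404.04731 — 4 statements merged into one kernel-verified Lean document; each statement's English description precedes it below -/
import Mathlib

section
/- Let n be a natural number and x : Fin n → Bool an assignment to propositional variables x_1,…,x_n. Then there exists an assignment s : Fin (n+1) → Bool to the auxiliary variables s_0,…,s_n such that s_0 = false and, for every i with 1 ≤ i ≤ n, the three clauses (¬s_{i−1} ∨ s_i), (¬s_{i−1} ∨ ¬x_i), and (s_{i−1} ∨ ¬x_i ∨ s_i) are all satisfied, if and only if at most one of x_1,…,x_n is true, i.e. the cardinality of {i : x_i = true} is at most 1. -/
/-!
Read the auxiliary variables as a register: clause 1 makes `s` monotone along the chain,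
clauses 1 and 3 force `s_i = 1` once some earlier `x_j` is true, and clause 2 forbids `x_i`
when `s_{i-1} = 1`. Two true variables `x_a, x_b` with `a < b` therefore clash at `s_{b-1}`.
Conversely, when at most one `x_i` is true, the prefix disjunction `s_k = x_1 ∨ ⋯ ∨ x_k`
satisfies every clause.
-/

open Finset

theorem Finset.card_filter_le_one_iff_of_lt {α : Type*} [LinearOrder α] [Fintype α]
    (p : α → Prop) [DecidablePred p] :
    (univ.filter p).card ≤ 1 ↔ ∀ a b, a < b → p a → ¬ p b := by
  simp only [card_le_one, mem_filter, mem_univ, true_and]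
  refine ⟨fun h a b hab ha hb => hab.ne (h a ha b hb), fun h a ha b hb => ?_⟩
  by_contra hne
  rcases lt_or_gt_of_ne hne with hab | hba
  · exact h a b hab ha hb
  · exact h b a hba hb ha

theorem Bool.not_or_eq_true_iff_le : ∀ {a b : Bool}, (!a || b) = true ↔ a ≤ b := by decide

namespace SequentialAMO

variable {n : ℕ}

section Clauses

variable {x : Fin n → Bool} {s : Fin (n + 1) → Bool}

theorem monotone_of_clause
    (h₁ : ∀ i : Fin n, (!(s i.castSucc) || s i.succ) = true) : Monotone s :=
  Fin.monotone_iff_le_succ.2 fun i => Bool.not_or_eq_true_iff_le.1 (h₁ i)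

theorem succ_eq_true_of_clauses {i : Fin n}
    (h₁ : (!(s i.castSucc) || s i.succ) = true)
    (h₃ : (s i.castSucc || !(x i) || s i.succ) = true) (hx : x i = true) :
    s i.succ = true := by
  cases hs : s i.castSucc <;> simp_all

theorem eq_true_of_castSucc_lt
    (h₁ : ∀ i : Fin n, (!(s i.castSucc) || s i.succ) = true)
    (h₃ : ∀ i : Fin n, (s i.castSucc || !(x i) || s i.succ) = true)
    {j : Fin n} {k : Fin (n + 1)} (hjk : j.castSucc < k) (hx : x j = true) :
    s k = true :=
  Bool.le_iff_imp.1 (monotone_of_clause h₁ (Fin.castSucc_lt_iff_succ_le.1 hjk))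
    (succ_eq_true_of_clauses (h₁ j) (h₃ j) hx)

theorem eq_false_of_lt_of_clauses
    (h₁ : ∀ i : Fin n, (!(s i.castSucc) || s i.succ) = true)
    (h₂ : ∀ i : Fin n, (!(s i.castSucc) || !(x i)) = true)
    (h₃ : ∀ i : Fin n, (s i.castSucc || !(x i) || s i.succ) = true)
    {a b : Fin n} (hab : a < b) (ha : x a = true) : x b = false := by
  have hs : s b.castSucc = true :=
    eq_true_of_castSucc_lt h₁ h₃ (Fin.castSucc_lt_castSucc_iff.2 hab) ha
  simpa [hs] using h₂ b

end Clauses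

def prefixOr (x : Fin n → Bool) (k : Fin (n + 1)) : Bool :=
  decide (∃ j : Fin n, j.castSucc < k ∧ x j = true)

variable (x : Fin n → Bool)

@[simp]
theorem prefixOr_zero : prefixOr x 0 = false := by
  simp [prefixOr]

theorem prefixOr_monotone : Monotone (prefixOr x) := fun k l hkl => by
  simp only [prefixOr, Bool.le_iff_imp, decide_eq_true_eq]
  exact fun ⟨j, hj, hx⟩ => ⟨j, hj.trans_le hkl, hx⟩

theorem prefixOr_succ_of_eq_true {i : Fin n} (hx : x i = true) : prefixOr x i.succ = true :=
  decide_eq_true ⟨i, Fin.castSucc_lt_succ, hx⟩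

theorem prefixOr_castSucc_of_card_le_one
    (h : (univ.filter fun i : Fin n => x i = true).card ≤ 1) {i : Fin n} (hx : x i = true) :
    prefixOr x i.castSucc = false :=
  decide_eq_false fun ⟨j, hji, hj⟩ =>
    (card_filter_le_one_iff_of_lt _).1 h j i (Fin.castSucc_lt_castSucc_iff.1 hji) hj hx

end SequentialAMO

open SequentialAMO

/-- The sequential at-most-one (AMO) encoding is correct: for an assignment
`x` to the variables `x_1, …, x_n`, there exists an assignment `s` to the
auxiliary variables `s_0, …, s_n` with `s_0 = false` satisfying, for each
`1 ≤ i ≤ n`, the clauses `(¬s_{i-1} ∨ s_i)`, `(¬s_{i-1} ∨ ¬x_i)` and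
`(s_{i-1} ∨ ¬x_i ∨ s_i)`, if and only if at most one of the `x_i` is true. -/
theorem amo_encoding_correct (n : ℕ) (x : Fin n → Bool) :
    (∃ s : Fin (n + 1) → Bool,
      s 0 = false ∧
      ∀ i : Fin n,
        ((!(s i.castSucc) || s i.succ) = true ∧
         (!(s i.castSucc) || !(x i)) = true ∧
         (s i.castSucc || !(x i) || s i.succ) = true)) ↔
    (Finset.univ.filter fun i : Fin n => x i = true).card ≤ 1 := by
  constructor
  · rintro ⟨s, -, hcl⟩
    refine (card_filter_le_one_iff_of_lt _).2 fun a b hab ha => ?_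
    simpa using eq_false_of_lt_of_clauses (fun i => (hcl i).1) (fun i => (hcl i).2.1)
      (fun i => (hcl i).2.2) hab ha
  · intro h
    refine ⟨prefixOr x, prefixOr_zero x, fun i => ⟨?_, ?_, ?_⟩⟩
    · exact Bool.not_or_eq_true_iff_le.2 (prefixOr_monotone x Fin.castSucc_lt_succ.le)
    · cases hx : x i with
      | false => simp
      | true => simp [prefixOr_castSucc_of_card_le_one x h hx]
    · cases hx : x i with
      | false => simp
      | true => simp [prefixOr_succ_of_eq_true x hx]
end

section
/- Let N and N' be types, childT : N' → ℕ → Option N' the indexed child function of the target tree T, sel : N → ℕ → Option N the selected indexed edges in the source space, g : N' → N an injective map, and r : N' the root of T. Assume: (Φ_≅) for all n', i, n'_c, if childT n' i = some n'_c then sel (g n') i = some (g n'_c); (T is a tree) every m' ≠ r has a parent in T, and parents in T are unique, i.e. if childT p i = some m' and childT q j = some m' then p = q and i = j; (Φ_CN) every node has at most one parent under sel, i.e. if sel p i = some m and sel q j = some m then p = q and i = j; (Φ_RN) no selected edge points to g r, i.e. sel p i ≠ some (g r) for all p, i. Then the selected edges reflect the target edges: for all n', i, m', if sel (g n') i = some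 (g m') then childT n' i = some m'. -/
theorem selected_edges_reflect_general {N N' : Type*}
    (childT : N' → ℕ → Option N') (sel : N → ℕ → Option N)
    (g : N' → N) (r : N')
    (hg : Function.Injective g)
    (hiso : ∀ (n' : N') (i : ℕ) (n'c : N'),
      childT n' i = some n'c → sel (g n') i = some (g n'c))
    (htree_parent : ∀ m' : N', m' ≠ r → ∃ (p : N') (i : ℕ), childT p i = some m')
    (hCN : ∀ (p q : N) (i j : ℕ) (m : N),
      sel p i = some m → sel q j = some m → p = q ∧ i = j)
    (hRN : ∀ (p : N) (i : ℕ), sel p i ≠ some (g r)) :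
    ∀ (n' : N') (i : ℕ) (m' : N'),
      sel (g n') i = some (g m') → childT n' i = some m' := by
  intro n' i m' hsel
  have hm'r : m' ≠ r := by
    rintro rfl
    exact hRN (g n') i hsel
  obtain ⟨p, j, hpj⟩ := htree_parent m' hm'r
  obtain ⟨hgp, rfl⟩ := hCN (g p) (g n') j i (g m') (hiso p j m' hpj) hsel
  rwa [hg hgp] at hpj

/-- Under the hard constraints of the encoding, the selected edges in the
source space reflect the edges of the target tree: if the images under the
injective matching `g` of two target nodes are connected by a selected edge,
then the target nodes are connected by the corresponding edge of `T`. -/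
theorem selected_edges_reflect {N N' : Type*}
    (childT : N' → ℕ → Option N') (sel : N → ℕ → Option N)
    (g : N' → N) (r : N')
    (hg : Function.Injective g)
    (hiso : ∀ (n' : N') (i : ℕ) (n'c : N'),
      childT n' i = some n'c → sel (g n') i = some (g n'c))
    (htree_parent : ∀ m' : N', m' ≠ r → ∃ (p : N') (i : ℕ), childT p i = some m')
    (htree_uniq : ∀ (p q : N') (i j : ℕ) (m' : N'),
      childT p i = some m' → childT q j = some m' → p = q ∧ i = j)
    (hCN : ∀ (p q : N) (i j : ℕ) (m : N),
      sel p i = some m → sel q j = some m → p = q ∧ i = j)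
    (hRN : ∀ (p : N) (i : ℕ), sel p i ≠ some (g r)) :
    ∀ (n' : N') (i : ℕ) (m' : N'),
      sel (g n') i = some (g m') → childT n' i = some m' :=
  selected_edges_reflect_general childT sel g r hg hiso htree_parent hCN hRN
end

section
/- Let N and N' be types, childT : N' → ℕ → Option N' the indexed child function of the target tree T, sel : N → ℕ → Option N the selected indexed edges in the source space, g : N' → N an injective map, and r : N' the root of T. Assume: (Φ_≅) for all n', i, n'_c, if childT n' i = some n'_c then sel (g n') i = some (g n'_c); (T is a tree) every m' ≠ r has a parent in T, and parents in T are unique; (Φ_CN) every node has at most one parent under sel; (Φ_RN) sel p i ≠ some (g r) for all p, i. Then g is an edge-preserving and edge-reflecting embedding: for all n', i, m', childT n' i = some m' if and only if sel (g n') i = some (g m'). Consequently the restriction of the selected edges to the image of g is exactly the image under g of the edges of T, so the tree selected in the source space on the matched nodes is isomorphic to T via g. -/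
/-!
A matched edge `sel (g n') i = some (g m')` cannot end at `g r`, so `m' ≠ r` has a parent
edge `childT p j = some m'` in `T`; its image `sel (g p) j = some (g m')` ends at the same
node, so uniqueness of parents in the source space forces `g p = g n'` and `j = i`, and
injectivity of `g` gives `p = n'`.
-/

section ChildFunctions

variable {X Y : Type*} {c : X → ℕ → Option X} {d : Y → ℕ → Option Y} {g : X → Y}

theorem eq_some_of_map_eq_some (hg : Function.Injective g)
    (hmap : ∀ p i m, c p i = some m → d (g p) i = some (g m))
    {r : X} (hparent : ∀ m, m ≠ r → ∃ p i, c p i = some m)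
    (hd : ∀ p q i j m, d p i = some m → d q j = some m → p = q ∧ i = j)
    (hroot : ∀ p i, d p i ≠ some (g r)) {p : X} {i : ℕ} {m : X}
    (h : d (g p) i = some (g m)) : c p i = some m := by
  have hm : m ≠ r := by
    rintro rfl
    exact hroot _ _ h
  obtain ⟨q, j, hq⟩ := hparent m hm
  obtain ⟨hgqp, rfl⟩ := hd _ _ _ _ _ (hmap q j m hq) h
  rwa [← hg hgqp]

theorem edges_restrict_range_eq_image
    (hiff : ∀ p i m, c p i = some m ↔ d (g p) i = some (g m)) :
    {e : Y × ℕ × Y | (∃ p, e.1 = g p) ∧ (∃ m, e.2.2 = g m) ∧ d e.1 e.2.1 = some e.2.2} =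
      {e : Y × ℕ × Y | ∃ p i m, c p i = some m ∧ e = (g p, i, g m)} := by
  ext ⟨a, i, b⟩
  constructor
  · rintro ⟨⟨p, rfl⟩, ⟨m, rfl⟩, h⟩
    exact ⟨p, i, m, (hiff p i m).2 h, rfl⟩
  · rintro ⟨p, i, m, h, ⟨⟩⟩
    exact ⟨⟨p, rfl⟩, ⟨m, rfl⟩, (hiff p i m).1 h⟩

end ChildFunctions

theorem selected_tree_isomorphic_general {N N' : Type*}
    (childT : N' → ℕ → Option N') (sel : N → ℕ → Option N)
    (g : N' → N) (r : N')
    (hg : Function.Injective g)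
    (hiso : ∀ (n' : N') (i : ℕ) (n'c : N'),
      childT n' i = some n'c → sel (g n') i = some (g n'c))
    (htree_parent : ∀ m' : N', m' ≠ r → ∃ (p : N') (i : ℕ), childT p i = some m')
    (hCN : ∀ (p q : N) (i j : ℕ) (m : N),
      sel p i = some m → sel q j = some m → p = q ∧ i = j)
    (hRN : ∀ (p : N) (i : ℕ), sel p i ≠ some (g r)) :
    (∀ (n' : N') (i : ℕ) (m' : N'),
      childT n' i = some m' ↔ sel (g n') i = some (g m')) ∧
    {e : N × ℕ × N |
        (∃ n' : N', e.1 = g n') ∧ (∃ m' : N', e.2.2 = g m') ∧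
        sel e.1 e.2.1 = some e.2.2} =
      {e : N × ℕ × N | ∃ (n' : N') (i : ℕ) (m' : N'),
        childT n' i = some m' ∧ e = (g n', i, g m')} := by
  have hiff : ∀ n' i m', childT n' i = some m' ↔ sel (g n') i = some (g m') :=
    fun _ _ _ => ⟨hiso _ _ _, eq_some_of_map_eq_some hg hiso htree_parent hCN hRN⟩
  exact ⟨hiff, edges_restrict_range_eq_image hiff⟩

/-- Correctness guarantee: under the hard constraints, `g` is an
edge-preserving and edge-reflecting embedding of the target tree `T` into
the source space, and the selected edges restricted to the image of `g` are
exactly the image under `g` of the edges of `T`; hence the selected tree on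
the matched nodes is isomorphic to `T` via `g`. -/
theorem selected_tree_isomorphic {N N' : Type*}
    (childT : N' → ℕ → Option N') (sel : N → ℕ → Option N)
    (g : N' → N) (r : N')
    (hg : Function.Injective g)
    (hiso : ∀ (n' : N') (i : ℕ) (n'c : N'),
      childT n' i = some n'c → sel (g n') i = some (g n'c))
    (htree_parent : ∀ m' : N', m' ≠ r → ∃ (p : N') (i : ℕ), childT p i = some m')
    (htree_uniq : ∀ (p q : N') (i j : ℕ) (m' : N'),
      childT p i = some m' → childT q j = some m' → p = q ∧ i = j)
    (hCN : ∀ (p q : N) (i j : ℕ) (m : N),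
      sel p i = some m → sel q j = some m → p = q ∧ i = j)
    (hRN : ∀ (p : N) (i : ℕ), sel p i ≠ some (g r)) :
    (∀ (n' : N') (i : ℕ) (m' : N'),
      childT n' i = some m' ↔ sel (g n') i = some (g m')) ∧
    {e : N × ℕ × N |
        (∃ n' : N', e.1 = g n') ∧ (∃ m' : N', e.2.2 = g m') ∧
        sel e.1 e.2.1 = some e.2.2} =
      {e : N × ℕ × N | ∃ (n' : N') (i : ℕ) (m' : N'),
        childT n' i = some m' ∧ e = (g n', i, g m')} :=
  selected_tree_isomorphic_general childT sel g r hg hiso htree_parent hCN hRN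
end

section
/- Let V be a type and consider a state ρ = (S, F_N, F_E) with edge set S ⊆ V × ℕ × V, free-node set F_N ⊆ V and free-edge-slot set F_E ⊆ V × ℕ. Suppose (n_p, i, n) ∈ S, n ∉ F_N, (n_p, i) ∉ F_E, (n_p', j) ∈ F_E, (n_p', j, n) ∉ S, and (n_p, i) ≠ (n_p', j). Then: (1) the preconditions of dcon(n_p, e_i, n) hold in ρ; (2) in the post-state of dcon(n_p, e_i, n), the preconditions of con(n_p', e_j, n) hold; and (3) executing dcon(n_p, e_i, n) followed by con(n_p', e_j, n) yields exactly the state ((S \ {(n_p, i, n)}) ∪ {(n_p', j, n)}, F_N, (F_E ∪ {(n_p, i)}) \ {(n_p', j)}). Hence the big-step semantics of the high-level action Mov(n, n_p, e_i, n_p', e_j) is realized by this composition of low-level actions without changing the edit effect. -/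
/-- A state of the operational semantics of edit scripts: the current edge
set of the source space, the set of free nodes, and the set of free edge
slots. -/
structure EditState (V : Type*) where
  S : Set (V × ℕ × V)
  FN : Set V
  FE : Set (V × ℕ)

variable {V : Type*}

/-- Precondition of the low-level action `dcon(n_p, e_i, n)`. -/
def dconPre (ρ : EditState V) (np : V) (i : ℕ) (n : V) : Prop :=
  n ∉ ρ.FN ∧ (np, i) ∉ ρ.FE ∧ (np, i, n) ∈ ρ.S

/-- Post-state of the low-level action `dcon(n_p, e_i, n)`. -/
def dconPost (ρ : EditState V) (np : V) (i : ℕ) (n : V) : EditState V :=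
  ⟨ρ.S \ {(np, i, n)}, ρ.FN ∪ {n}, ρ.FE ∪ {(np, i)}⟩

/-- Precondition of the low-level action `con(n_p, e_i, n)`. -/
def conPre (ρ : EditState V) (np : V) (i : ℕ) (n : V) : Prop :=
  n ∈ ρ.FN ∧ (np, i) ∈ ρ.FE ∧ (np, i, n) ∉ ρ.S

/-- Post-state of the low-level action `con(n_p, e_i, n)`. -/
def conPost (ρ : EditState V) (np : V) (i : ℕ) (n : V) : EditState V :=
  ⟨ρ.S ∪ {(np, i, n)}, ρ.FN \ {n}, ρ.FE \ {(np, i)}⟩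

theorem conPre_dconPost {ρ : EditState V} {np np' n : V} {i j : ℕ}
    (hslot : (np', j) ∈ ρ.FE) (hedge : (np', j, n) ∉ ρ.S) :
    conPre (dconPost ρ np i n) np' j n :=
  ⟨Or.inr rfl, Or.inl hslot, fun h => hedge h.1⟩

theorem conPost_dconPost {ρ : EditState V} {np np' n : V} {i j : ℕ} (hn : n ∉ ρ.FN) :
    conPost (dconPost ρ np i n) np' j n =
      ⟨(ρ.S \ {(np, i, n)}) ∪ {(np', j, n)}, ρ.FN, (ρ.FE ∪ {(np, i)}) \ {(np', j)}⟩ := by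
  simp only [conPost, dconPost, Set.union_singleton, Set.insert_sdiff_self_of_notMem hn]

theorem mov_realized_general (S : Set (V × ℕ × V)) (FN : Set V) (FE : Set (V × ℕ))
    (np n np' : V) (i j : ℕ)
    (hS : (np, i, n) ∈ S) (hn : n ∉ FN) (hnpi : (np, i) ∉ FE)
    (hnpj : (np', j) ∈ FE) (hS' : (np', j, n) ∉ S) :
    dconPre ⟨S, FN, FE⟩ np i n ∧
    conPre (dconPost ⟨S, FN, FE⟩ np i n) np' j n ∧
    conPost (dconPost ⟨S, FN, FE⟩ np i n) np' j n =
      ⟨(S \ {(np, i, n)}) ∪ {(np', j, n)}, FN,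
        (FE ∪ {(np, i)}) \ {(np', j)}⟩ :=
  ⟨⟨hn, hnpi, hS⟩, conPre_dconPost hnpj hS', conPost_dconPost hn⟩

/-- The high-level action `Mov(n, n_p, e_i, n_p', e_j)` is realized by
`dcon(n_p, e_i, n)` followed by `con(n_p', e_j, n)`: both preconditions hold
along the way, and the resulting state moves the edge of `n` from `(n_p, e_i)`
to `(n_p', e_j)` while leaving the free-node set unchanged. -/
theorem mov_realized (S : Set (V × ℕ × V)) (FN : Set V) (FE : Set (V × ℕ))
    (np n np' : V) (i j : ℕ)
    (hS : (np, i, n) ∈ S) (hn : n ∉ FN) (hnpi : (np, i) ∉ FE)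
    (hnpj : (np', j) ∈ FE) (hS' : (np', j, n) ∉ S)
    (hne : (np, i) ≠ (np', j)) :
    dconPre ⟨S, FN, FE⟩ np i n ∧
    conPre (dconPost ⟨S, FN, FE⟩ np i n) np' j n ∧
    conPost (dconPost ⟨S, FN, FE⟩ np i n) np' j n =
      ⟨(S \ {(np, i, n)}) ∪ {(np', j, n)}, FN,
        (FE ∪ {(np, i)}) \ {(np', j)}⟩ :=
  mov_realized_general S FN FE np n np' i j hS hn hnpi hnpj hS'
end
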